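/- arXiv:2506.22536 — 2 statements merged into one kernel-verified Lean document; each statement's English description precedes it below -/
import Mathlib

section
/- (Consistency against fixed alternatives.) If μ > 0, then for every α ∈ (0,1), lim_{n→∞} P(|T_{n,λ}(θ_n*)| > z_{1−α/2}) = 1 and lim_{n→∞} sup_{θ_n ∈ Θ} P(|T_{n,λ}(θ_n)| > z_{1−α/2}) = 1. -/
open MeasureTheory ProbabilityTheory Filter

/-- Standard normal cumulative distribution function Φ. -/
noncomputable def stdNormalCDF (x : ℝ) : ℝ :=
  ∫ t in Set.Iic x, (1 / Real.sqrt (2 * Real.pi)) * Real.exp (-(t ^ 2) / 2)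

/-- A policy `θ_n = (ϑ_1, …)`: a sequence of {0,1}-valued random variables such that `ϑ_1`
is independent of the reward sequence and, for `i ≥ 2`, `ϑ_i` is measurable with respect to
`σ(ϑ_1, R_1, …, R_{i-1})`. -/
structure Policy {Ω : Type*} [MeasurableSpace Ω] (P : Measure Ω) (R : ℕ → Ω → ℝ) where
  ϑ : ℕ → Ω → ℝ
  meas : ∀ i, Measurable (ϑ i)
  vals : ∀ i ω, ϑ i ω = 0 ∨ ϑ i ω = 1
  indep_first : IndepFun (ϑ 1) (fun ω i => R i ω) P
  adapted : ∀ i, 2 ≤ i →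
    @Measurable Ω ℝ (MeasurableSpace.comap (ϑ 1) inferInstance ⊔
      ⨆ j ∈ Set.Icc 1 (i - 1), MeasurableSpace.comap (R j) inferInstance) _ (ϑ i)

/-- The oracle weighted TAB statistic `T_{m,λ}(θ_n)` under a policy `ϑ`:
`T_0 = 0` and `T_m = T_{m-1} + (2ϑ_m - 1)(λμ/((1-λ)n) + R_m/(√n σ))`. -/
noncomputable def Tstat {Ω : Type*} (R : ℕ → Ω → ℝ) (lam μ σ : ℝ) (n : ℕ)
    (ϑ : ℕ → Ω → ℝ) : ℕ → Ω → ℝ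
  | 0 => fun _ => 0
  | m + 1 => fun ω =>
      Tstat R lam μ σ n ϑ m ω +
        (2 * ϑ (m + 1) ω - 1) * (lam * μ / ((1 - lam) * n) + R (m + 1) ω / (Real.sqrt n * σ))

/-- The statistic `T_{m,λ}(θ_n^*)` under the optimal policy `θ_n^*`, where `ξ` is the
fair-coin first action:  for `i ≥ 2`, `ϑ_i^* = 1` iff `T_{i-1,λ}(θ^*_{i-1}) ≥ 0`. -/
noncomputable def Tstar {Ω : Type*} (R : ℕ → Ω → ℝ) (lam μ σ : ℝ) (n : ℕ)
    (ξ : Ω → ℝ) : ℕ → Ω → ℝ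
  | 0 => fun _ => 0
  | 1 => fun ω => (2 * ξ ω - 1) * (lam * μ / ((1 - lam) * n) + R 1 ω / (Real.sqrt n * σ))
  | m + 2 => fun ω =>
      Tstar R lam μ σ n ξ (m + 1) ω +
        (2 * (if 0 ≤ Tstar R lam μ σ n ξ (m + 1) ω then (1 : ℝ) else 0) - 1) *
          (lam * μ / ((1 - lam) * n) + R (m + 2) ω / (Real.sqrt n * σ))

/-- `ω_n = λμ/(1-λ) + √n μ/σ`. -/
noncomputable def omegaN (lam μ σ : ℝ) (n : ℕ) : ℝ :=
  lam * μ / (1 - lam) + Real.sqrt n * μ / σ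

/-- `σ₀ = √(1 + μ²/σ²)`. -/
noncomputable def sigma0 (μ σ : ℝ) : ℝ := Real.sqrt (1 + μ ^ 2 / σ ^ 2)

/-
Always playing arm 1 gives `T_n = λμ/(1-λ) + √n · (S_n/n)/σ` with `S_n = R_1 + ⋯ + R_n`, which
tends to `+∞` almost surely by the strong law of large numbers, as `μ > 0`. The optimal policy
follows the sign of the running statistic, so each step raises `|T_m(θ*)|` by at least the
corresponding increment of the always-1 statistic, and `|T_n(θ_n*)|` dominates it. Almost sure
divergence forces both rejection probabilities to `1`; the supremum over policies is squeezed
between the always-1 policy and `1`.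
-/

open Topology Finset

lemma abs_add_le_abs_add_signed (t x : ℝ) :
    |t| + x ≤ |t + (2 * (if 0 ≤ t then (1 : ℝ) else 0) - 1) * x| := by
  split_ifs with ht
  · rw [abs_of_nonneg ht]
    linarith [le_abs_self (t + (2 * 1 - 1) * x)]
  · rw [abs_of_neg (not_le.mp ht)]
    linarith [neg_abs_le (t + (2 * 0 - 1) * x)]

section Statistic

variable {Ω : Type*} (R : ℕ → Ω → ℝ) (lam μ σ : ℝ) (n : ℕ)

lemma Tstat_one (m : ℕ) (ω : Ω) :
    Tstat R lam μ σ n (fun _ _ => 1) m ω =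
      m * (lam * μ / ((1 - lam) * n)) + (∑ i ∈ range m, R (i + 1) ω) / (√n * σ) := by
  induction m with
  | zero => simp [Tstat]
  | succ m ih =>
    simp only [Tstat, ih, sum_range_succ, add_div]
    push_cast
    ring

lemma Tstat_one_self (hn : n ≠ 0) (ω : Ω) :
    Tstat R lam μ σ n (fun _ _ => 1) n ω =
      lam * μ / (1 - lam) + √n * ((∑ i ∈ range n, R (i + 1) ω) / n / σ) := by
  have hs : 0 < √(n : ℝ) := Real.sqrt_pos.mpr (Nat.cast_pos.mpr (Nat.pos_of_ne_zero hn))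
  have hsq : (n : ℝ) = √n * √n := (Real.mul_self_sqrt n.cast_nonneg).symm
  rw [Tstat_one]
  generalize √(n : ℝ) = s at hs hsq ⊢
  rw [hsq]
  field_simp

lemma Tstat_one_le_abs_Tstar (ξ : Ω → ℝ) (hξ : ∀ ω, ξ ω = 0 ∨ ξ ω = 1) (ω : Ω) :
    ∀ m, Tstat R lam μ σ n (fun _ _ => 1) m ω ≤ |Tstar R lam μ σ n ξ m ω|
  | 0 => by simp [Tstat, Tstar]
  | 1 => by
    have hsign : |2 * ξ ω - 1| = 1 := by rcases hξ ω with h | h <;> norm_num [h]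
    simp only [Tstat, Tstar, abs_mul, hsign]
    linarith [le_abs_self (lam * μ / ((1 - lam) * n) + R 1 ω / (√n * σ))]
  | m + 2 => by
    have ih := Tstat_one_le_abs_Tstar ξ hξ ω (m + 1)
    have hstep := abs_add_le_abs_add_signed (Tstar R lam μ σ n ξ (m + 1) ω)
      (lam * μ / ((1 - lam) * n) + R (m + 2) ω / (√n * σ))
    simp only [Tstat, Tstar] at ih hstep ⊢
    linarith

variable [MeasurableSpace Ω]

lemma measurable_Tstat {ϑ : ℕ → Ω → ℝ} (hϑ : ∀ i, Measurable (ϑ i))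
    (hR : ∀ i, Measurable (R i)) (m : ℕ) : Measurable (Tstat R lam μ σ n ϑ m) := by
  induction m with
  | zero => exact measurable_const
  | succ m ih =>
    exact ih.add ((((hϑ (m + 1)).const_mul 2).sub measurable_const).mul
      (((hR (m + 1)).div_const _).const_add _))

end Statistic

section Probability

variable {Ω : Type*} [MeasurableSpace Ω] {P : Measure Ω}

lemma tendsto_measure_lt_of_ae_tendsto_atTop [IsFiniteMeasure P] {ι : Type*} {L : Filter ι}
    [L.IsCountablyGenerated] {X : ι → Ω → ℝ} (hX : ∀ i, Measurable (X i))
    (h : ∀ᵐ ω ∂P, Tendsto (fun i => X i ω) L atTop) (z : ℝ) :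
    Tendsto (fun i => P {ω | z < X i ω}) L (𝓝 (P Set.univ)) := by
  refine tendsto_measure_of_ae_tendsto_indicator_of_isFiniteMeasure L MeasurableSet.univ
    (fun i => measurableSet_lt measurable_const (hX i)) ?_
  filter_upwards [h] with ω hω
  filter_upwards [hω.eventually_gt_atTop z] with i hi
  simpa using hi

lemma tendsto_toReal_measure_lt_of_le [IsProbabilityMeasure P] {ι : Type*} {L : Filter ι}
    [L.IsCountablyGenerated] {X Y : ι → Ω → ℝ} (hX : ∀ i, Measurable (X i))
    (h : ∀ᵐ ω ∂P, Tendsto (fun i => X i ω) L atTop) (hXY : ∀ i ω, X i ω ≤ Y i ω) (z : ℝ) :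
    Tendsto (fun i => (P {ω | z < Y i ω}).toReal) L (𝓝 1) := by
  have hX_lim := (ENNReal.tendsto_toReal (measure_ne_top P _)).comp
    (tendsto_measure_lt_of_ae_tendsto_atTop hX h z)
  rw [measure_univ, ENNReal.toReal_one] at hX_lim
  refine tendsto_of_tendsto_of_tendsto_of_le_of_le hX_lim tendsto_const_nhds (fun i => ?_)
    (fun i => measureReal_le_one)
  exact ENNReal.toReal_mono (measure_ne_top P _)
    (measure_mono fun ω hω => lt_of_lt_of_le hω (hXY i ω))

lemma ae_tendsto_Tstat_one_atTop {R : ℕ → Ω → ℝ} {lam μ σ : ℝ} (hR : ∀ i, Measurable (R i))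
    (hindep : iIndepFun R P) (hident : ∀ i, 1 ≤ i → P.map (R i) = P.map (R 1))
    (hint : Integrable (R 1) P) (hμ : μ = ∫ ω, R 1 ω ∂P) (hσ : 0 < σ) (hμpos : 0 < μ) :
    ∀ᵐ ω ∂P, Tendsto (fun n : ℕ => Tstat R lam μ σ n (fun _ _ => 1) n ω) atTop atTop := by
  have hslln : ∀ᵐ ω ∂P, Tendsto (fun n : ℕ => (∑ i ∈ range n, R (i + 1) ω) / n) atTop (𝓝 μ) :=
    hμ ▸ strong_law_ae_real (fun i => R (i + 1)) hint
      (fun i j hij => hindep.indepFun (by omega))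
      (fun i => ⟨(hR _).aemeasurable, (hR 1).aemeasurable, hident (i + 1) (by omega)⟩)
  have hsqrt : Tendsto (fun n : ℕ => √(n : ℝ)) atTop atTop :=
    Real.tendsto_sqrt_atTop.comp tendsto_natCast_atTop_atTop
  filter_upwards [hslln] with ω hω
  refine (tendsto_atTop_add_const_left atTop (lam * μ / (1 - lam))
    (hsqrt.atTop_mul_pos (div_pos hμpos hσ) (hω.div_const σ))).congr' ?_
  filter_upwards [eventually_ne_atTop 0] with n hn
  exact (Tstat_one_self R lam μ σ n hn ω).symm

end Probability

def Policy.one {Ω : Type*} [MeasurableSpace Ω] (P : Measure Ω) [IsZeroOrProbabilityMeasure P]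
    (R : ℕ → Ω → ℝ) : Policy P R where
  ϑ := fun _ _ => 1
  meas := fun _ => measurable_const
  vals := fun _ _ => Or.inr rfl
  indep_first := indepFun_const_left 1 _
  adapted := fun _ _ => measurable_const

theorem stmt5_general
    {Ω : Type*} [MeasurableSpace Ω] (P : Measure Ω) [IsProbabilityMeasure P]
    (R : ℕ → Ω → ℝ) (M μ σ lam : ℝ)
    (hRmeas : ∀ i, Measurable (R i))
    (hiid : iIndepFun R P)
    (hident : ∀ i, 1 ≤ i → Measure.map (R i) P = Measure.map (R 1) P)
    (hbdd : ∀ i, 1 ≤ i → ∀ᵐ ω ∂P, |R i ω| ≤ M)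
    (hμ : μ = ∫ ω, R 1 ω ∂P)
    (hσ : 0 < σ)
    (hμpos : 0 < μ)
    (ξ : Ω → ℝ) (hξvals : ∀ ω, ξ ω = 0 ∨ ξ ω = 1)
    (z : ℝ) :
    Tendsto (fun n : ℕ => (P {ω | z < |Tstar R lam μ σ n ξ n ω|}).toReal)
        atTop (nhds 1) ∧
      Tendsto (fun n : ℕ =>
          ⨆ θ : Policy P R, (P {ω | z < |Tstat R lam μ σ n θ.ϑ n ω|}).toReal)
        atTop (nhds 1) := by
  have hint : Integrable (R 1) P :=
    .of_bound (hRmeas 1).aestronglyMeasurable M (hbdd 1 le_rfl)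
  have hdiv := ae_tendsto_Tstat_one_atTop (lam := lam) hRmeas hiid hident hint hμ hσ hμpos
  have hmeas (n : ℕ) : Measurable (Tstat R lam μ σ n (fun _ _ => 1) n) :=
    measurable_Tstat R lam μ σ n (fun _ => measurable_const) hRmeas n
  refine ⟨tendsto_toReal_measure_lt_of_le hmeas hdiv
    (fun n ω => Tstat_one_le_abs_Tstar R lam μ σ n ξ hξvals ω n) z, ?_⟩
  have hbound (n : ℕ) : BddAbove (Set.range fun θ : Policy P R =>
      (P {ω | z < |Tstat R lam μ σ n θ.ϑ n ω|}).toReal) :=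
    ⟨1, by rintro _ ⟨θ, rfl⟩; exact measureReal_le_one⟩
  refine tendsto_of_tendsto_of_tendsto_of_le_of_le
    (tendsto_toReal_measure_lt_of_le hmeas hdiv (fun n ω => le_abs_self _) z)
    tendsto_const_nhds (fun n => le_ciSup (hbound n) (Policy.one P R)) (fun n => ?_)
  have : Nonempty (Policy P R) := ⟨Policy.one P R⟩
  exact ciSup_le fun θ => measureReal_le_one

/-- Consistency against fixed alternatives: if `μ > 0`, then
`P(|T_{n,λ}(θ_n^*)| > z_{1-α/2}) → 1` and `sup_{θ_n ∈ Θ} P(|T_{n,λ}(θ_n)| > z_{1-α/2}) → 1`. -/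
theorem stmt5
    {Ω : Type*} [MeasurableSpace Ω] (P : Measure Ω) [IsProbabilityMeasure P]
    (R : ℕ → Ω → ℝ) (M μ σ lam : ℝ) (hM : 0 < M)
    (hRmeas : ∀ i, Measurable (R i))
    (hiid : iIndepFun R P)
    (hident : ∀ i, 1 ≤ i → Measure.map (R i) P = Measure.map (R 1) P)
    (hbdd : ∀ i, 1 ≤ i → ∀ᵐ ω ∂P, |R i ω| ≤ M)
    (hμ : μ = ∫ ω, R 1 ω ∂P)
    (hσ : 0 < σ) (hvar : σ ^ 2 = ∫ ω, (R 1 ω - μ) ^ 2 ∂P)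
    (hlam : lam ∈ Set.Ioo (0 : ℝ) 1)
    (hμpos : 0 < μ)
    (ξ : Ω → ℝ) (hξmeas : Measurable ξ) (hξvals : ∀ ω, ξ ω = 0 ∨ ξ ω = 1)
    (hξ1 : P {ω | ξ ω = 1} = 1 / 2) (hξ0 : P {ω | ξ ω = 0} = 1 / 2)
    (hξindep : IndepFun ξ (fun ω i => R i ω) P)
    (α z : ℝ) (hα : α ∈ Set.Ioo (0 : ℝ) 1) (hz : stdNormalCDF z = 1 - α / 2) :
    Tendsto (fun n : ℕ => (P {ω | z < |Tstar R lam μ σ n ξ n ω|}).toReal)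
        atTop (nhds 1) ∧
      Tendsto (fun n : ℕ =>
          ⨆ θ : Policy P R, (P {ω | z < |Tstat R lam μ σ n θ.ϑ n ω|}).toReal)
        atTop (nhds 1) :=
  stmt5_general P R M μ σ lam hRmeas hiid hident hbdd hμ hσ hμpos ξ hξvals z
end

section
/- For every ω ∈ ℝ and σ₀ > 0, the bandit (spike) density is a probability density: f^{ω,σ₀}(y) ≥ 0 for every y ∈ ℝ, and ∫_ℝ f^{ω,σ₀}(y) dy = 1; consequently B(ω,σ₀) is a probability measure on ℝ. Moreover, when ω = 0 and σ₀ = 1, f^{0,1}(y) = (1/√(2π))·exp(−y²/2) is the standard normal density. -/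
open MeasureTheory ProbabilityTheory Filter

/-- The bandit (spike) density `f^{ω,σ₀}`. -/
noncomputable def spikeDensity (w s0 y : ℝ) : ℝ :=
  (1 / (Real.sqrt (2 * Real.pi) * s0)) * Real.exp (-(|y| - w) ^ 2 / (2 * s0 ^ 2))
    - (w / s0 ^ 2) * Real.exp (2 * w * |y| / s0 ^ 2) * stdNormalCDF (-(|y| + w) / s0)

/-!
On the half-line `x = |y| ≥ 0` the spike density is `g(x) = F'(x) / 2` for
`F(x) = Φ((x - ω)/σ₀) - exp(2ωx/σ₀²) Φ(-(x + ω)/σ₀)`, because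
`exp(2ωx/σ₀²) φ((x + ω)/σ₀) = φ((x - ω)/σ₀)`. Since `F(0) = 0` and `F(x) → 1`,
the even function `g(|y|)` integrates to `1`. Nonnegativity of `g` is trivial for `ω ≤ 0`;
for `ω > 0` it follows from the Mills ratio bound `Φ(-t) ≤ φ(t)/t`, which also
controls the second term of `F` at infinity.
-/

open Set Real Topology

lemma hasDerivAt_setIntegral_Iic {f : ℝ → ℝ} (hf : Integrable f) (hfc : Continuous f)
    (x : ℝ) : HasDerivAt (fun y => ∫ t in Iic y, f t) (f x) x := by
  have split : (fun y => ∫ t in Iic y, f t) =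
      fun y => (∫ t in (0 : ℝ)..y, f t) + ∫ t in Iic 0, f t := by
    funext y
    rw [← intervalIntegral.integral_Iic_sub_Iic hf.integrableOn hf.integrableOn, sub_add_cancel]
  rw [split]
  exact (hfc.integral_hasStrictDerivAt 0 x).hasDerivAt.add_const _

lemma tendsto_setIntegral_Iic_atTop {f : ℝ → ℝ} (hf : Integrable f) :
    Tendsto (fun y => ∫ t in Iic y, f t) atTop (𝓝 (∫ t, f t)) :=
  (aecover_Iic tendsto_id).integral_tendsto_of_countably_generated hf

lemma isProbabilityMeasure_withDensity_ofReal {α : Type*} [MeasurableSpace α] {μ : Measure α}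
    {f : α → ℝ} (hf : ∀ x, 0 ≤ f x) (h : ∫ x, f x ∂μ = 1) :
    IsProbabilityMeasure (μ.withDensity fun x => ENNReal.ofReal (f x)) := by
  have hint : Integrable f μ := .of_integral_ne_zero (by rw [h]; exact one_ne_zero)
  constructor
  rw [withDensity_apply _ MeasurableSet.univ, Measure.restrict_univ,
    ← ofReal_integral_eq_lintegral_ofReal hint (Eventually.of_forall hf), h, ENNReal.ofReal_one]

local notation "φ" => gaussianPDFReal 0 1

lemma gaussianPDFReal_zero_one (x : ℝ) : φ x = 1 / √(2 * π) * exp (-(x ^ 2) / 2) := by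
  simp [gaussianPDFReal, neg_div]

lemma gaussianPDFReal_zero_one_le (x : ℝ) : φ x ≤ 1 / √(2 * π) := by
  rw [gaussianPDFReal_zero_one]
  exact mul_le_of_le_one_right (by positivity) (exp_le_one_iff.2 (by nlinarith [sq_nonneg x]))

lemma hasDerivAt_gaussianPDFReal_zero_one (x : ℝ) : HasDerivAt φ (-x * φ x) x := by
  simp_rw [funext gaussianPDFReal_zero_one]
  have hexponent : HasDerivAt (fun u : ℝ => -(u ^ 2) / 2) (-x) x :=
    ((hasDerivAt_pow 2 x).neg.div_const 2).congr_deriv (by push_cast; ring)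
  exact (hexponent.exp.const_mul _).congr_deriv (by ring)

lemma tendsto_gaussianPDFReal_zero_one_atTop : Tendsto φ atTop (𝓝 0) := by
  simp_rw [funext gaussianPDFReal_zero_one]
  have h : Tendsto (fun x : ℝ => -(x ^ 2) / 2) atTop atBot :=
    (tendsto_neg_atTop_atBot.comp (tendsto_pow_atTop two_ne_zero)).atBot_div_const two_pos
  simpa using (tendsto_exp_atBot.comp h).const_mul (1 / √(2 * π))

lemma stdNormalCDF_eq_setIntegral (x : ℝ) : stdNormalCDF x = ∫ t in Iic x, φ t := by
  simp only [stdNormalCDF, gaussianPDFReal_zero_one]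

lemma stdNormalCDF_nonneg (x : ℝ) : 0 ≤ stdNormalCDF x := by
  rw [stdNormalCDF_eq_setIntegral]
  exact integral_nonneg (gaussianPDFReal_nonneg 0 1)

lemma stdNormalCDF_neg (x : ℝ) : stdNormalCDF (-x) = ∫ t in Ioi x, φ t := by
  rw [stdNormalCDF_eq_setIntegral, ← integral_comp_neg_Ioi]
  simp [gaussianPDFReal]

lemma hasDerivAt_stdNormalCDF (x : ℝ) : HasDerivAt stdNormalCDF (φ x) x := by
  simp_rw [funext stdNormalCDF_eq_setIntegral]
  refine hasDerivAt_setIntegral_Iic (integrable_gaussianPDFReal 0 1) ?_ x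
  simp_rw [funext gaussianPDFReal_zero_one]
  fun_prop

lemma tendsto_stdNormalCDF_atTop : Tendsto stdNormalCDF atTop (𝓝 1) := by
  simp_rw [funext stdNormalCDF_eq_setIntegral]
  simpa [integral_gaussianPDFReal_eq_one] using
    tendsto_setIntegral_Iic_atTop (integrable_gaussianPDFReal 0 1)

/-- The Mills ratio bound: on `(t, ∞)`, `φ` is dominated by `x φ(x) / t = -φ'(x) / t`. -/
lemma stdNormalCDF_neg_le {t : ℝ} (ht : 0 < t) : stdNormalCDF (-t) ≤ φ t / t := by
  have hderiv : ∀ x ∈ Ici t, HasDerivAt (fun u => -φ u / t) (x / t * φ x) x := fun x _ =>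
    ((hasDerivAt_gaussianPDFReal_zero_one x).neg.div_const t).congr_deriv (by ring)
  have hpos : ∀ x ∈ Ioi t, 0 ≤ x / t * φ x := fun x hx =>
    mul_nonneg (div_nonneg (ht.trans hx).le ht.le) (gaussianPDFReal_nonneg 0 1 x)
  have hlim : Tendsto (fun u => -φ u / t) atTop (𝓝 0) := by
    simpa using (tendsto_gaussianPDFReal_zero_one_atTop.neg).div_const t
  calc stdNormalCDF (-t) = ∫ x in Ioi t, φ x := stdNormalCDF_neg t
    _ ≤ ∫ x in Ioi t, x / t * φ x := by
      refine setIntegral_mono_on (integrable_gaussianPDFReal 0 1).integrableOn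
        (integrableOn_Ioi_deriv_of_nonneg' hderiv hpos hlim) measurableSet_Ioi fun x hx => ?_
      exact le_mul_of_one_le_left (gaussianPDFReal_nonneg 0 1 x) ((one_le_div ht).2 hx.out.le)
    _ = φ t / t := by
      rw [integral_Ioi_of_hasDerivAt_of_nonneg' hderiv hpos hlim]
      ring

section Spike

variable {w s : ℝ}

noncomputable def spikeHalf (w s x : ℝ) : ℝ :=
  (1 / (√(2 * π) * s)) * exp (-(x - w) ^ 2 / (2 * s ^ 2))
    - (w / s ^ 2) * exp (2 * w * x / s ^ 2) * stdNormalCDF (-(x + w) / s)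

noncomputable def spikeCDF (w s x : ℝ) : ℝ :=
  stdNormalCDF ((x - w) / s) - exp (2 * w * x / s ^ 2) * stdNormalCDF (-(x + w) / s)

lemma spikeDensity_eq_spikeHalf_abs (y : ℝ) : spikeDensity w s y = spikeHalf w s |y| := rfl

lemma exp_mul_gaussianPDFReal_zero_one (x : ℝ) :
    exp (2 * w * x / s ^ 2) * φ ((x + w) / s) = φ ((x - w) / s) := by
  rw [gaussianPDFReal_zero_one, gaussianPDFReal_zero_one, mul_left_comm, ← exp_add]
  ring_nf

lemma spikeHalf_eq (x : ℝ) :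
    spikeHalf w s x = φ ((x - w) / s) / s
      - (w / s ^ 2) * exp (2 * w * x / s ^ 2) * stdNormalCDF (-(x + w) / s) := by
  rw [spikeHalf, gaussianPDFReal_zero_one]
  ring_nf

lemma exp_mul_stdNormalCDF_le (hs : 0 < s) {x : ℝ} (hxw : 0 < x + w) :
    exp (2 * w * x / s ^ 2) * stdNormalCDF (-(x + w) / s) ≤ s / (x + w) * φ ((x - w) / s) := by
  have ht : 0 < (x + w) / s := div_pos hxw hs
  calc exp (2 * w * x / s ^ 2) * stdNormalCDF (-(x + w) / s)
      ≤ exp (2 * w * x / s ^ 2) * (φ ((x + w) / s) / ((x + w) / s)) := by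
        rw [neg_div]
        exact mul_le_mul_of_nonneg_left (stdNormalCDF_neg_le ht) (exp_nonneg _)
    _ = s / (x + w) * φ ((x - w) / s) := by
        rw [← exp_mul_gaussianPDFReal_zero_one]
        field_simp

lemma spikeHalf_nonneg (hs : 0 < s) {x : ℝ} (hx : 0 ≤ x) : 0 ≤ spikeHalf w s x := by
  rw [spikeHalf_eq, sub_nonneg]
  have hφ : 0 ≤ φ ((x - w) / s) / s := div_nonneg (gaussianPDFReal_nonneg 0 1 _) hs.le
  rcases le_or_gt w 0 with hw | hw
  · refine le_trans ?_ hφ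
    rw [mul_assoc]
    exact mul_nonpos_of_nonpos_of_nonneg (div_nonpos_of_nonpos_of_nonneg hw (sq_nonneg s))
      (mul_nonneg (exp_nonneg _) (stdNormalCDF_nonneg _))
  · have hxw : 0 < x + w := by linarith
    calc w / s ^ 2 * exp (2 * w * x / s ^ 2) * stdNormalCDF (-(x + w) / s)
        ≤ w / s ^ 2 * (s / (x + w) * φ ((x - w) / s)) := by
          rw [mul_assoc]
          exact mul_le_mul_of_nonneg_left (exp_mul_stdNormalCDF_le hs hxw) (by positivity)
      _ = w / (x + w) * (φ ((x - w) / s) / s) := by field_simp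
      _ ≤ φ ((x - w) / s) / s :=
          mul_le_of_le_one_left hφ ((div_le_one hxw).2 (by linarith))

lemma hasDerivAt_spikeCDF (x : ℝ) : HasDerivAt (spikeCDF w s) (2 * spikeHalf w s x) x := by
  have d1 : HasDerivAt (fun x => stdNormalCDF ((x - w) / s)) (φ ((x - w) / s) * (1 / s)) x :=
    (hasDerivAt_stdNormalCDF _).comp x (((hasDerivAt_id' x).sub_const w).div_const s)
  have d2 : HasDerivAt (fun x => exp (2 * w * x / s ^ 2))
      (exp (2 * w * x / s ^ 2) * (2 * w * 1 / s ^ 2)) x :=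
    (((hasDerivAt_id' x).const_mul (2 * w)).div_const (s ^ 2)).exp
  have d3 : HasDerivAt (fun x => stdNormalCDF (-(x + w) / s)) (φ (-(x + w) / s) * (-1 / s)) x :=
    (hasDerivAt_stdNormalCDF _).comp x (((hasDerivAt_id' x).add_const w).neg.div_const s)
  refine (d1.sub (d2.mul d3)).congr_deriv ?_
  have hsym : φ (-(x + w) / s) = φ ((x + w) / s) := by
    simp only [gaussianPDFReal_zero_one, neg_div, neg_sq]
  rw [spikeHalf_eq, hsym, ← exp_mul_gaussianPDFReal_zero_one (w := w) (s := s) x]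
  ring

lemma spikeCDF_zero : spikeCDF w s 0 = 0 := by
  simp [spikeCDF, neg_div, sub_eq_add_neg, add_comm]

lemma tendsto_spikeCDF_atTop (hs : 0 < s) : Tendsto (spikeCDF w s) atTop (𝓝 1) := by
  have hmain : Tendsto (fun x => stdNormalCDF ((x - w) / s)) atTop (𝓝 1) :=
    tendsto_stdNormalCDF_atTop.comp
      ((tendsto_atTop_add_const_right _ (-w) tendsto_id).atTop_div_const hs)
  have htail : Tendsto (fun x => exp (2 * w * x / s ^ 2) * stdNormalCDF (-(x + w) / s))
      atTop (𝓝 0) := by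
    have hbound : Tendsto (fun x => s * (1 / √(2 * π)) / (x + w)) atTop (𝓝 0) :=
      tendsto_const_nhds.div_atTop (tendsto_atTop_add_const_right _ w tendsto_id)
    refine squeeze_zero' (Eventually.of_forall fun x =>
      mul_nonneg (exp_nonneg _) (stdNormalCDF_nonneg _)) ?_ hbound
    filter_upwards [eventually_gt_atTop (-w)] with x hx
    have hxw : 0 < x + w := by linarith
    calc _ ≤ s / (x + w) * φ ((x - w) / s) := exp_mul_stdNormalCDF_le hs hxw
      _ ≤ s / (x + w) * (1 / √(2 * π)) :=
          mul_le_mul_of_nonneg_left (gaussianPDFReal_zero_one_le _) (div_pos hs hxw).le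
      _ = s * (1 / √(2 * π)) / (x + w) := by ring
  exact sub_zero (1 : ℝ) ▸ hmain.sub htail

lemma integral_Ioi_spikeHalf (hs : 0 < s) : ∫ x in Ioi 0, 2 * spikeHalf w s x = 1 := by
  rw [integral_Ioi_of_hasDerivAt_of_nonneg' (fun x _ => hasDerivAt_spikeCDF x)
    (fun x hx => mul_nonneg zero_le_two (spikeHalf_nonneg hs (le_of_lt hx)))
    (tendsto_spikeCDF_atTop hs), spikeCDF_zero, sub_zero]

end Spike

/-- `f^{ω,σ₀}` is a probability density (nonnegative, integrating to one, so that
`B(ω,σ₀)` is a probability measure), and `f^{0,1}` is the standard normal density. -/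
theorem stmt18 (w s0 : ℝ) (hs0 : 0 < s0) :
    (∀ y : ℝ, 0 ≤ spikeDensity w s0 y) ∧
      (∫ y, spikeDensity w s0 y) = 1 ∧
      IsProbabilityMeasure
        ((volume : Measure ℝ).withDensity fun y => ENNReal.ofReal (spikeDensity w s0 y)) ∧
      ∀ y : ℝ, spikeDensity 0 1 y =
        (1 / Real.sqrt (2 * Real.pi)) * Real.exp (-(y ^ 2) / 2) := by
  have hnonneg : ∀ y, 0 ≤ spikeDensity w s0 y := fun y => spikeHalf_nonneg hs0 (abs_nonneg y)
  have hintegral : ∫ y, spikeDensity w s0 y = 1 := by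
    simp_rw [spikeDensity_eq_spikeHalf_abs]
    rw [integral_comp_abs (f := spikeHalf w s0), ← integral_const_mul, integral_Ioi_spikeHalf hs0]
  refine ⟨hnonneg, hintegral, isProbabilityMeasure_withDensity_ofReal hnonneg hintegral, ?_⟩
  intro y
  simp [spikeDensity, sq_abs]
end
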